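/- arXiv:2410.23953 — 3 statements merged into one kernel-verified Lean document; each statement's English description precedes it below -/
import Mathlib

section
/- Majority vote approximately maximizes population utility: There is a universal constant c > 0 with the following property. Let N = 2 and let 𝓒 ⊆ LO(2)^𝓘 be a candidate space with finite, nonzero VC dimension VC(𝓒), and let f_maj be the majority vote mechanism, mapping each sample S to a profile in 𝓒 maximizing the sample utility on S (assumed to be attained). For every saliency distribution 𝓓_𝓘, population marginal 𝓜, every ε > 0 and δ ∈ (0,1), if the sample size m satisfies m ≥ (c/ε²)·VC(𝓒)·(log VC(𝓒) + log(1/ε) + log(1/δ)), then with probability at least 1 − δ over an i.i.d. sample S of size m, U(f_maj(S)) ≥ sup_{C ∈ 𝓒} U(C) − 2ε. -/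
/-
Majority vote maximizes the sample utility, i.e. the empirical frequency of the agreement event
`{(o, i) | C i = o}`, whose probability is the population utility `U(C)`. If all these
frequencies are within `ε` of their probabilities, the empirical maximizer is `2ε`-optimal.
The failure probability is bounded by the classical VC argument: Chebyshev and a ghost sample
reduce it to a deviation between two samples, whose law is invariant under swapping coordinates
of the two samples; for fixed samples only `(2m + 1) ^ d` traces of the agreement events on the
`2m` sample points matter (Sauer–Shelah), and each swapped difference is a Rademacher sum,
controlled by Hoeffding's bound via `cosh x ≤ exp (x² / 2)`. This gives a failure probability
of at most `4 (2m + 1) ^ d exp (-m ε² / 8)`, which is at most `δ` for the stated sample size.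
-/

open scoped ENNReal

noncomputable section

/-- Linear orders on `[N] = {1,…,N}` (as `Fin N`), encoded as permutations:
`o.symm c` is the rank of outcome `c` (smaller rank = more preferred). -/
abbrev LO (N : ℕ) := Equiv.Perm (Fin N)

/-- `c ≻_o c'` : outcome `c` is strictly preferred to `c'` under the linear order `o`. -/
def prefers {N : ℕ} (o : LO N) (c c' : Fin N) : Prop := o.symm c < o.symm c'

/-- `o ⊙ σ` : the linear order with `s₁ ≻_{o⊙σ} s₂` iff `σ⁻¹ s₁ ≻_o σ⁻¹ s₂`. -/
def odot {N : ℕ} (o σ : LO N) : LO N := o.trans σ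

/-- `C ⊙ᵢ σ` : apply `σ` to the ordering of issue `i`, leaving other issues unchanged. -/
def odotProfile {I : Type*} [DecidableEq I] {N : ℕ} (C : I → LO N) (i : I) (σ : LO N) :
    I → LO N :=
  Function.update C i (odot (C i) σ)

/-- The distribution of `m` i.i.d. draws from `p`. -/
def iidPMF {α : Type*} (p : PMF α) : (m : ℕ) → PMF (Fin m → α)
  | 0 => PMF.pure (fun i => i.elim0)
  | (m + 1) => p.bind fun a => (iidPMF p m).map (fun f => Fin.cons a f)

/-- Probability of an event under a PMF. -/
def prob {α : Type*} (p : PMF α) (s : Set α) : ℝ≥0∞ := p.toOuterMeasure s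

/-- Distribution of one sampled individual-issue pair: `i ~ 𝓓_𝓘`, then `o ~ 𝓜(i)`. -/
def sampleDist {I : Type*} {N : ℕ} (DI : PMF I) (M : I → PMF (LO N)) : PMF (LO N × I) :=
  DI.bind fun i => (M i).map fun o => (o, i)

/-- Sample utility (binary setting): fraction of sampled pairs on which `C` agrees. -/
def sampleUtility {I : Type*} {N : ℕ} {m : ℕ} (S : Fin m → LO N × I) (C : I → LO N) : ℝ :=
  (∑ k : Fin m, if C (S k).2 = (S k).1 then (1 : ℝ) else 0) / m

/-- Population utility `U(C) = E_{i ~ 𝓓_𝓘}[𝓜(i)_{C(i)}]`. -/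
def popUtility {I : Type*} {N : ℕ} (DI : PMF I) (M : I → PMF (LO N)) (C : I → LO N) : ℝ :=
  (∑' i, DI i * M i (C i)).toReal

/-- `J` is shattered by `𝓒`: every function on `J` agrees on `J` with some member of `𝓒`. -/
def Shatters {I : Type*} {α : Type*} (𝓒 : Set (I → α)) (J : Finset I) : Prop :=
  ∀ g : I → α, ∃ C ∈ 𝓒, ∀ i ∈ J, C i = g i

/-- The VC dimension of `𝓒` equals `d`. -/
def VCDimEq {I : Type*} {α : Type*} (𝓒 : Set (I → α)) (d : ℕ) : Prop :=
  (∃ J : Finset I, J.card = d ∧ Shatters 𝓒 J) ∧ ∀ J : Finset I, Shatters 𝓒 J → J.card ≤ d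

namespace PMF

variable {α β : Type*}

def lexpect (p : PMF α) (f : α → ℝ≥0∞) : ℝ≥0∞ := ∑' a, p a * f a

lemma lexpect_mono (p : PMF α) {f g : α → ℝ≥0∞} (h : ∀ a, f a ≤ g a) :
    p.lexpect f ≤ p.lexpect g :=
  ENNReal.tsum_le_tsum fun a => mul_le_mul_right (h a) _

lemma lexpect_const (p : PMF α) (c : ℝ≥0∞) : p.lexpect (fun _ => c) = c := by
  simp [lexpect, ENNReal.tsum_mul_right, p.tsum_coe]

lemma lexpect_add (p : PMF α) (f g : α → ℝ≥0∞) :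
    p.lexpect (fun a => f a + g a) = p.lexpect f + p.lexpect g := by
  simp [lexpect, mul_add, ENNReal.tsum_add]

lemma lexpect_const_mul (p : PMF α) (c : ℝ≥0∞) (f : α → ℝ≥0∞) :
    p.lexpect (fun a => c * f a) = c * p.lexpect f := by
  simp only [lexpect, ← ENNReal.tsum_mul_left, mul_left_comm]

lemma lexpect_comm (p : PMF α) (q : PMF β) (f : α → β → ℝ≥0∞) :
    p.lexpect (fun a => q.lexpect (f a)) = q.lexpect (fun b => p.lexpect (f · b)) := by
  simp only [lexpect, ← ENNReal.tsum_mul_left, mul_left_comm (p _)]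
  exact ENNReal.tsum_comm

lemma lexpect_bind (p : PMF α) (q : α → PMF β) (f : β → ℝ≥0∞) :
    (p.bind q).lexpect f = p.lexpect (fun a => (q a).lexpect f) := by
  simp only [lexpect, bind_apply, ← ENNReal.tsum_mul_right, ← ENNReal.tsum_mul_left, mul_assoc]
  exact ENNReal.tsum_comm

lemma lexpect_map (p : PMF α) (g : α → β) (f : β → ℝ≥0∞) :
    (p.map g).lexpect f = p.lexpect (f ∘ g) := by
  rw [map, lexpect_bind]
  simp [lexpect, pure_apply]

end PMF

open PMF

section Probability

variable {α : Type*}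

lemma prob_eq_lexpect_indicator (p : PMF α) (s : Set α) :
    prob p s = p.lexpect (s.indicator 1) := by
  rw [prob, toOuterMeasure_apply, lexpect]
  congr 1 with a
  by_cases h : a ∈ s <;> simp [h]

lemma prob_mono (p : PMF α) {s t : Set α} (h : s ⊆ t) : prob p s ≤ prob p t :=
  MeasureTheory.measure_mono (μ := p.toOuterMeasure) h

lemma prob_biUnion_finset_le {ι : Type*} (p : PMF α) (s : Finset ι) (f : ι → Set α) :
    prob p (⋃ i ∈ s, f i) ≤ ∑ i ∈ s, prob p (f i) :=
  MeasureTheory.measure_biUnion_finset_le (μ := p.toOuterMeasure) s f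

lemma prob_add_prob_compl (p : PMF α) (s : Set α) : prob p s + prob p sᶜ = 1 := by
  rw [prob_eq_lexpect_indicator, prob_eq_lexpect_indicator, ← lexpect_add]
  simpa [Set.indicator_self_add_compl_apply] using p.lexpect_const 1

lemma prob_le_one (p : PMF α) (s : Set α) : prob p s ≤ 1 :=
  le_self_add.trans_eq (prob_add_prob_compl p s)

lemma mul_prob_le_lexpect (p : PMF α) (f : α → ℝ≥0∞) (t : ℝ≥0∞) :
    t * prob p {a | t ≤ f a} ≤ p.lexpect f := by
  rw [prob_eq_lexpect_indicator, ← lexpect_const_mul]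
  refine p.lexpect_mono fun a => ?_
  by_cases h : t ≤ f a <;> simp [h]

end Probability

section IID

variable {α : Type*}

lemma iidPMF_apply (p : PMF α) (m : ℕ) (S : Fin m → α) : iidPMF p m S = ∏ k, p (S k) := by
  induction m with
  | zero => simp [iidPMF, Subsingleton.elim S fun i => i.elim0]
  | succ m ih =>
    rw [iidPMF, bind_apply, tsum_eq_single (S 0), map_apply, tsum_eq_single (Fin.tail S),
      if_pos (Fin.cons_self_tail S).symm, ih, Fin.prod_univ_succ]
    · rfl
    · intro T hT
      rw [if_neg]
      intro h
      exact hT (by rw [h, Fin.tail_cons])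
    · intro a ha
      simp only [map_apply, mul_eq_zero, ENNReal.tsum_eq_zero, ite_eq_right_iff]
      refine Or.inr fun T h => absurd (by rw [h, Fin.cons_zero]) ha

lemma lexpect_iidPMF_succ (p : PMF α) (m : ℕ) (F : (Fin (m + 1) → α) → ℝ≥0∞) :
    (iidPMF p (m + 1)).lexpect F
      = p.lexpect fun a => (iidPMF p m).lexpect fun T => F (Fin.cons a T) := by
  simp only [iidPMF, lexpect_bind, lexpect_map, Function.comp_def]

lemma lexpect_iidPMF_sum (p : PMF α) (g : α → ℝ≥0∞) (m : ℕ) :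
    (iidPMF p m).lexpect (fun S => ∑ k, g (S k)) = m * p.lexpect g := by
  induction m with
  | zero => simpa using lexpect_const _ 0
  | succ m ih =>
    simp only [lexpect_iidPMF_succ, Fin.sum_univ_succ, Fin.cons_zero, Fin.cons_succ, lexpect_add,
      lexpect_const, ih]
    push_cast
    ring

lemma lexpect_iidPMF_sum_sq_le (p : PMF α) (g : α → ℝ≥0∞) (m : ℕ) :
    (iidPMF p m).lexpect (fun S => (∑ k, g (S k)) ^ 2)
      ≤ m * p.lexpect (fun a => g a ^ 2) + m ^ 2 * p.lexpect g ^ 2 := by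
  induction m with
  | zero => simpa using (lexpect_const _ 0).le
  | succ m ih =>
    have expand : ∀ a (T : Fin m → α), (∑ k, g (Fin.cons a T k : α)) ^ 2
        = g a ^ 2 + 2 * g a * ∑ k, g (T k) + (∑ k, g (T k)) ^ 2 := fun a T => by
      rw [Fin.sum_univ_succ]; simp only [Fin.cons_zero, Fin.cons_succ]; ring
    simp only [lexpect_iidPMF_succ, expand, lexpect_add, lexpect_const, lexpect_const_mul,
      lexpect_iidPMF_sum, mul_right_comm _ _ (_ * p.lexpect g)]
    calc _ ≤ p.lexpect (fun a => g a ^ 2) + 2 * (m * p.lexpect g) * p.lexpect g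
            + (m * p.lexpect (fun a => g a ^ 2) + m ^ 2 * p.lexpect g ^ 2) := by gcongr
      _ ≤ _ + p.lexpect g ^ 2 := le_self_add
      _ = (m + 1) * p.lexpect (fun a => g a ^ 2) + (m + 1) ^ 2 * p.lexpect g ^ 2 := by ring
      _ = _ := by push_cast; rfl

end IID

section Chebyshev

variable {α : Type*} {m : ℕ}

def sampleCount (S : Fin m → α) (A : Set α) : ℝ := ∑ k, A.indicator 1 (S k)

lemma sampleCount_nonneg (S : Fin m → α) (A : Set α) : 0 ≤ sampleCount S A :=
  Finset.sum_nonneg fun _ _ => Set.indicator_nonneg (fun _ _ => zero_le_one) _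

lemma ofReal_sampleCount (S : Fin m → α) (A : Set α) :
    ENNReal.ofReal (sampleCount S A) = ∑ k, A.indicator 1 (S k) := by
  rw [sampleCount, ENNReal.ofReal_sum_of_nonneg (f := fun k => A.indicator 1 (S k))
    fun _ _ => Set.indicator_nonneg (fun _ _ => zero_le_one) _]
  congr 1 with k
  by_cases h : S k ∈ A <;> simp [h]

/-- The variance of a binomial count is at most the number of trials. -/
lemma lexpect_sq_sampleCount_sub_le (p : PMF α) (A : Set α) (m : ℕ) :
    (iidPMF p m).lexpect
      (fun S => ENNReal.ofReal ((sampleCount S A - m * (prob p A).toReal) ^ 2)) ≤ m := by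
  set c : ℝ≥0∞ := m * prob p A
  have hc_le : c ≤ m := mul_le_of_le_one_right' (prob_le_one p A)
  have hc : c ≠ ⊤ := ne_top_of_le_ne_top (ENNReal.natCast_ne_top m) hc_le
  have hmean : (iidPMF p m).lexpect (fun S => ENNReal.ofReal (sampleCount S A)) = c := by
    simp only [ofReal_sampleCount, lexpect_iidPMF_sum, c, prob_eq_lexpect_indicator]
  have hsq :
      (iidPMF p m).lexpect (fun S => ENNReal.ofReal (sampleCount S A) ^ 2) ≤ c + c ^ 2 := by
    have hind : ∀ a, A.indicator (1 : α → ℝ≥0∞) a ^ 2 = A.indicator 1 a := fun a => by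
      by_cases h : a ∈ A <;> simp [h]
    simpa only [ofReal_sampleCount, hind, ← prob_eq_lexpect_indicator, mul_pow, c]
      using lexpect_iidPMF_sum_sq_le p (A.indicator 1) m
  -- `(x - c)² + 2cx = x² + c²` between nonnegative reals, read in `ℝ≥0∞`
  have expand : ∀ S : Fin m → α,
      ENNReal.ofReal ((sampleCount S A - c.toReal) ^ 2) + 2 * c * ENNReal.ofReal (sampleCount S A)
        = ENNReal.ofReal (sampleCount S A) ^ 2 + c ^ 2 := fun S => by
    have hx := sampleCount_nonneg S A
    rw [← ENNReal.ofReal_toReal hc, ← ENNReal.ofReal_ofNat 2, ← ENNReal.ofReal_mul zero_le_two,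
      ← ENNReal.ofReal_mul (by positivity), ← ENNReal.ofReal_pow hx,
      ← ENNReal.ofReal_pow ENNReal.toReal_nonneg,
      ← ENNReal.ofReal_add (sq_nonneg _) (by positivity),
      ← ENNReal.ofReal_add (by positivity) (by positivity),
      ENNReal.toReal_ofReal ENNReal.toReal_nonneg]
    congr 1
    ring
  have hcr : c.toReal = m * (prob p A).toReal := by simp [c, ENNReal.toReal_mul]
  have hsum := congrArg (iidPMF p m).lexpect (funext expand)
  rw [lexpect_add, lexpect_add, lexpect_const_mul, lexpect_const, hmean, hcr] at hsum
  refine le_trans ?_ hc_le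
  refine ENNReal.le_of_add_le_add_right (a := 2 * c * c) (by finiteness) ?_
  calc _ = _ := hsum
    _ ≤ c + c ^ 2 + c ^ 2 := by gcongr
    _ = c + 2 * c * c := by ring

lemma prob_le_abs_sampleCount_sub_le (p : PMF α) (A : Set α) (m : ℕ) {t : ℝ} (ht : 0 < t) :
    prob (iidPMF p m) {S | t ≤ |sampleCount S A - m * (prob p A).toReal|}
      ≤ ENNReal.ofReal (m / t ^ 2) := by
  rw [ENNReal.ofReal_div_of_pos (by positivity), ENNReal.le_div_iff_mul_le
    (Or.inl (ENNReal.ofReal_pos.2 (by positivity)).ne') (Or.inl ENNReal.ofReal_ne_top), mul_comm,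
    ENNReal.ofReal_natCast]
  refine le_trans ?_ ((mul_prob_le_lexpect _ _ (ENNReal.ofReal (t ^ 2))).trans
    (lexpect_sq_sampleCount_sub_le p A m))
  gcongr
  refine prob_mono _ fun S hS => ENNReal.ofReal_le_ofReal ?_
  simpa only [sq_abs] using pow_le_pow_left₀ ht.le hS 2

end Chebyshev

/-- Symmetrization by a ghost sample. -/
lemma prob_exists_lt_abs_sub_le_two_mul_lexpect {β ι : Type*} (μ : PMF β) (𝓔 : Set ι)
    (f : ι → β → ℝ) (a : ι → ℝ) {t : ℝ}
    (hconc : ∀ A ∈ 𝓔, prob μ {y | t / 2 ≤ |f A y - a A|} ≤ 2⁻¹) :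
    prob μ {x | ∃ A ∈ 𝓔, t < |f A x - a A|}
      ≤ 2 * μ.lexpect fun x => prob μ {y | ∃ A ∈ 𝓔, t / 2 < |f A x - f A y|} := by
  have key : ∀ x, 2⁻¹ * {x | ∃ A ∈ 𝓔, t < |f A x - a A|}.indicator 1 x
      ≤ prob μ {y | ∃ A ∈ 𝓔, t / 2 < |f A x - f A y|} := by
    intro x
    by_cases hx : ∃ A ∈ 𝓔, t < |f A x - a A|
    · obtain ⟨A, hA, hgap⟩ := hx
      have hgood : 2⁻¹ ≤ prob μ {y | t / 2 ≤ |f A y - a A|}ᶜ := by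
        refine ENNReal.le_of_add_le_add_left (a := 2⁻¹) (by simp) ?_
        rw [ENNReal.inv_two_add_inv_two, ← prob_add_prob_compl μ {y | t / 2 ≤ |f A y - a A|}]
        gcongr
        exact hconc A hA
      rw [Set.indicator_of_mem (show x ∈ {x | ∃ A ∈ 𝓔, t < |f A x - a A|} from ⟨A, hA, hgap⟩),
        Pi.one_apply, mul_one]
      refine hgood.trans (prob_mono _ fun y hy => ⟨A, hA, ?_⟩)
      have hy : |f A y - a A| < t / 2 := lt_of_not_ge hy
      have := abs_sub_abs_le_abs_sub (f A x - a A) (f A y - a A)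
      rw [sub_sub_sub_cancel_right] at this
      linarith
    · simp [hx]
  calc prob μ {x | ∃ A ∈ 𝓔, t < |f A x - a A|}
      = 2 * (2⁻¹ * prob μ {x | ∃ A ∈ 𝓔, t < |f A x - a A|}) := by
        rw [← mul_assoc, ENNReal.mul_inv_cancel two_ne_zero ENNReal.ofNat_ne_top, one_mul]
    _ ≤ _ := by
        rw [prob_eq_lexpect_indicator, ← lexpect_const_mul]
        gcongr
        exact lexpect_mono _ key

section Swap

variable {α : Type*} {m : ℕ}

def swapAt (η : Fin m → Bool) (S T : Fin m → α) : Fin m → α := fun k => if η k then S k else T k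

lemma lexpect_iidPMF_iidPMF_eq_tsum (p : PMF α) (F : (Fin m → α) → (Fin m → α) → ℝ≥0∞) :
    (iidPMF p m).lexpect (fun S => (iidPMF p m).lexpect (F S))
      = ∑' x : (Fin m → α) × (Fin m → α), (∏ k, p (x.1 k) * p (x.2 k)) * F x.1 x.2 := by
  simp only [lexpect, iidPMF_apply, ← ENNReal.tsum_mul_left, ENNReal.tsum_prod',
    Finset.prod_mul_distrib, mul_assoc]

lemma lexpect_iidPMF_iidPMF_swapAt (p : PMF α) (η : Fin m → Bool)
    (F : (Fin m → α) → (Fin m → α) → ℝ≥0∞) :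
    (iidPMF p m).lexpect (fun S => (iidPMF p m).lexpect fun T => F (swapAt η S T) (swapAt η T S))
      = (iidPMF p m).lexpect (fun S => (iidPMF p m).lexpect (F S)) := by
  let e : Equiv.Perm ((Fin m → α) × (Fin m → α)) :=
    Function.Involutive.toPerm (fun x => (swapAt η x.1 x.2, swapAt η x.2 x.1)) fun x => by
      ext k <;> by_cases h : η k <;> simp only [swapAt, h, if_true, if_false, Bool.false_eq_true]
  rw [lexpect_iidPMF_iidPMF_eq_tsum, lexpect_iidPMF_iidPMF_eq_tsum]
  conv_rhs => rw [← e.tsum_eq]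
  refine tsum_congr fun x => congrArg₂ _ (Finset.prod_congr rfl fun k _ => ?_) rfl
  show _ = p (swapAt η x.1 x.2 k) * p (swapAt η x.2 x.1 k)
  by_cases h : η k <;> simp only [swapAt, h, if_true, if_false, Bool.false_eq_true, mul_comm]

lemma lexpect_iidPMF_iidPMF_le_of_swapAt (p : PMF α) (F : (Fin m → α) → (Fin m → α) → ℝ≥0∞)
    (b : ℝ≥0∞) (h : ∀ S T,
      (uniformOfFintype (Fin m → Bool)).lexpect (fun η => F (swapAt η S T) (swapAt η T S)) ≤ b) :
    (iidPMF p m).lexpect (fun S => (iidPMF p m).lexpect (F S)) ≤ b := by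
  calc (iidPMF p m).lexpect (fun S => (iidPMF p m).lexpect (F S))
      = (uniformOfFintype (Fin m → Bool)).lexpect fun η => (iidPMF p m).lexpect fun S =>
          (iidPMF p m).lexpect fun T => F (swapAt η S T) (swapAt η T S) := by
        simp only [lexpect_iidPMF_iidPMF_swapAt, lexpect_const]
    _ = (iidPMF p m).lexpect fun S => (iidPMF p m).lexpect fun T =>
          (uniformOfFintype (Fin m → Bool)).lexpect fun η => F (swapAt η S T) (swapAt η T S) := by
        rw [lexpect_comm]
        simp only [lexpect_comm (iidPMF p m) (uniformOfFintype _)]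
    _ ≤ (iidPMF p m).lexpect fun _ => (iidPMF p m).lexpect fun _ => b :=
        lexpect_mono _ fun S => lexpect_mono _ fun T => h S T
    _ = b := by simp only [lexpect_const]

end Swap

section Signs

variable {m : ℕ}

open Real in
lemma sum_exp_sum_signs (b : Fin m → ℝ) :
    ∑ η : Fin m → Bool, exp (∑ k, if η k then b k else -b k) = ∏ k, 2 * cosh (b k) := by
  simp only [Real.exp_sum]
  rw [← Fintype.prod_sum (fun k (s : Bool) => exp (if s then b k else -b k))]
  simp [cosh_eq, mul_div_cancel₀]

open Real in
lemma sum_exp_mul_sum_signs_le (a : Fin m → ℝ) (ha : ∀ k, |a k| ≤ 1) (l : ℝ) :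
    ∑ η : Fin m → Bool, exp (l * ∑ k, if η k then a k else -a k)
      ≤ 2 ^ m * exp (m * l ^ 2 / 2) := by
  simp only [Finset.mul_sum, mul_ite, mul_neg, sum_exp_sum_signs]
  calc ∏ k, 2 * cosh (l * a k) ≤ ∏ _k : Fin m, 2 * exp (l ^ 2 / 2) := by
        refine Finset.prod_le_prod (fun k _ => by positivity) fun k _ => ?_
        grw [cosh_le_exp_half_sq, mul_pow, mul_le_of_le_one_right (sq_nonneg l)
          (sq_le_one_iff_abs_le_one _ |>.2 (ha k))]
    _ = 2 ^ m * exp (m * l ^ 2 / 2) := by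
        rw [Finset.prod_const, Finset.card_univ, Fintype.card_fin, mul_pow, ← exp_nat_mul,
          mul_div_assoc]

lemma lexpect_uniformOfFintype_ofReal {β : Type*} [Fintype β] [Nonempty β] (g : β → ℝ)
    (hg : ∀ b, 0 ≤ g b) :
    (uniformOfFintype β).lexpect (fun b => ENNReal.ofReal (g b))
      = ENNReal.ofReal ((∑ b, g b) / Fintype.card β) := by
  rw [lexpect, tsum_fintype, ENNReal.ofReal_div_of_pos (by simp [Fintype.card_pos]),
    ENNReal.ofReal_sum_of_nonneg fun b _ => hg b, ENNReal.ofReal_natCast, div_eq_mul_inv,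
    Finset.sum_mul]
  simp [uniformOfFintype_apply, mul_comm]

open Real in
/-- Hoeffding's inequality for a Rademacher sum. -/
lemma prob_le_abs_sum_signs_le (a : Fin m → ℝ) (ha : ∀ k, |a k| ≤ 1) {t l : ℝ} (hl : 0 ≤ l) :
    prob (uniformOfFintype (Fin m → Bool)) {η | t ≤ |∑ k, if η k then a k else -a k|}
      ≤ ENNReal.ofReal (2 * exp (-(l * t) + m * l ^ 2 / 2)) := by
  set X : (Fin m → Bool) → ℝ := fun η => ∑ k, if η k then a k else -a k
  set g : (Fin m → Bool) → ℝ := fun η => exp (-(l * t)) * (exp (l * X η) + exp (-l * X η))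
  have hind : ∀ η, {η | t ≤ |X η|}.indicator 1 η ≤ ENNReal.ofReal (g η) := by
    intro η
    by_cases h : t ≤ |X η|
    · rw [Set.indicator_of_mem (show η ∈ {η | t ≤ |X η|} from h), Pi.one_apply,
        ← ENNReal.ofReal_one]
      refine ENNReal.ofReal_le_ofReal ?_
      simp only [g, mul_add, ← exp_add]
      rcases le_abs'.1 h with h' | h'
      · exact le_add_of_nonneg_of_le (exp_nonneg _) (one_le_exp (by nlinarith))
      · exact le_add_of_le_of_nonneg (one_le_exp (by nlinarith)) (exp_nonneg _)
    · simp [h]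
  have hsum : ∑ η, g η ≤ 2 ^ m * (2 * exp (-(l * t) + m * l ^ 2 / 2)) := by
    simp only [g, ← Finset.mul_sum, Finset.sum_add_distrib]
    grw [sum_exp_mul_sum_signs_le a ha, sum_exp_mul_sum_signs_le a ha, neg_sq, exp_add]
    exact le_of_eq (by ring)
  calc prob (uniformOfFintype (Fin m → Bool)) {η | t ≤ |X η|}
      ≤ (uniformOfFintype (Fin m → Bool)).lexpect (fun η => ENNReal.ofReal (g η)) := by
        rw [prob_eq_lexpect_indicator]
        exact lexpect_mono _ hind
    _ = ENNReal.ofReal ((∑ η, g η) / 2 ^ m) := by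
        rw [lexpect_uniformOfFintype_ofReal g fun η => by positivity]
        simp
    _ ≤ _ := by
        gcongr
        rwa [div_le_iff₀' (by positivity)]

end Signs

section UniformConvergence

variable {α : Type*} {m : ℕ}

/-- The growth function (shatter coefficient) of `𝓔` at `n` is at most `K`. -/
def TraceBound (𝓔 : Set (Set α)) (n K : ℕ) : Prop :=
  ∀ P : Finset α, P.card ≤ n →
    ∃ 𝓑 : Finset (Set α), 𝓑.card ≤ K ∧ ∀ A ∈ 𝓔, ∃ B ∈ 𝓑, ∀ x ∈ P, x ∈ A ↔ x ∈ B

lemma sampleCount_swapAt_sub (η : Fin m → Bool) (S T : Fin m → α) (A : Set α) :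
    sampleCount (swapAt η S T) A - sampleCount (swapAt η T S) A
      = ∑ k, if η k then A.indicator 1 (S k) - A.indicator 1 (T k)
          else -(A.indicator 1 (S k) - A.indicator 1 (T k)) := by
  rw [sampleCount, sampleCount, ← Finset.sum_sub_distrib]
  refine Finset.sum_congr rfl fun k _ => ?_
  by_cases h : η k <;> simp [swapAt, h]

lemma prob_exists_lt_abs_sampleCount_swapAt_sub_le {𝓔 : Set (Set α)} {K : ℕ}
    (h𝓔 : TraceBound 𝓔 (2 * m) K) (S T : Fin m → α) {ε : ℝ} (hε : 0 ≤ ε) :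
    prob (uniformOfFintype (Fin m → Bool)) {η | ∃ A ∈ 𝓔,
        m * ε / 2 < |sampleCount (swapAt η S T) A - sampleCount (swapAt η T S) A|}
      ≤ K * ENNReal.ofReal (2 * Real.exp (-(m * ε ^ 2) / 8)) := by
  classical
  obtain ⟨𝓑, h𝓑K, h𝓑⟩ := h𝓔 (Finset.univ.image S ∪ Finset.univ.image T) <| by
    grw [Finset.card_union_le, Finset.card_image_le, Finset.card_image_le]
    simp [two_mul]
  calc _ ≤ prob (uniformOfFintype (Fin m → Bool)) (⋃ B ∈ 𝓑, {η | m * ε / 2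
        ≤ |sampleCount (swapAt η S T) B - sampleCount (swapAt η T S) B|}) := by
        refine prob_mono _ fun η ⟨A, hA, hlt⟩ => ?_
        obtain ⟨B, hB, hAB⟩ := h𝓑 A hA
        refine Set.mem_biUnion hB (show (m : ℝ) * ε / 2 ≤ _ from le_of_lt ?_)
        have hind : ∀ x ∈ Finset.univ.image S ∪ Finset.univ.image T,
            A.indicator (1 : α → ℝ) x = B.indicator 1 x := fun x hx => by
          by_cases h : x ∈ A <;> simp [h, ← hAB x hx]
        simpa only [sampleCount_swapAt_sub, hind (S _) (by simp), hind (T _) (by simp)] using hlt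
    _ ≤ ∑ B ∈ 𝓑, ENNReal.ofReal (2 * Real.exp (-(m * ε ^ 2) / 8)) := by
        refine (prob_biUnion_finset_le _ _ _).trans (Finset.sum_le_sum fun B _ => ?_)
        have := prob_le_abs_sum_signs_le (fun k => B.indicator 1 (S k) - B.indicator 1 (T k))
          (fun k => ?_) (t := m * ε / 2) (by positivity : (0 : ℝ) ≤ ε / 2)
        · rw [show -(ε / 2 * (m * ε / 2)) + m * (ε / 2) ^ 2 / 2 = -(m * ε ^ 2) / 8 by ring] at this
          simpa only [sampleCount_swapAt_sub] using this
        · by_cases hS : S k ∈ B <;> by_cases hT : T k ∈ B <;> simp [hS, hT]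
    _ ≤ _ := by
        rw [Finset.sum_const, nsmul_eq_mul]
        gcongr

theorem prob_exists_lt_abs_sampleCount_div_sub_le (p : PMF α) {𝓔 : Set (Set α)} {K : ℕ}
    (h𝓔 : TraceBound 𝓔 (2 * m) K) {ε : ℝ} (hε : 0 < ε) (hm : 8 ≤ m * ε ^ 2) :
    prob (iidPMF p m) {S | ∃ A ∈ 𝓔, ε < |sampleCount S A / m - (prob p A).toReal|}
      ≤ ENNReal.ofReal (4 * K * Real.exp (-(m * ε ^ 2) / 8)) := by
  have hm0 : (0 : ℝ) < m := by
    rcases Nat.eq_zero_or_pos m with rfl | h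
    · norm_num at hm
    · exact_mod_cast h
  have hrescale : ∀ S : Fin m → α, ∀ A : Set α, ε < |sampleCount S A / m - (prob p A).toReal|
      ↔ m * ε < |sampleCount S A - m * (prob p A).toReal| := fun S A => by
    rw [← mul_lt_mul_iff_right₀ hm0, ← abs_of_pos hm0, ← abs_mul, abs_of_pos hm0, mul_sub,
      mul_div_cancel₀ _ hm0.ne']
  have hcheb : ∀ A ∈ 𝓔, prob (iidPMF p m)
      {S | m * ε / 2 ≤ |sampleCount S A - m * (prob p A).toReal|} ≤ 2⁻¹ := fun A _ => by
    refine (prob_le_abs_sampleCount_sub_le p A m (by positivity)).trans ?_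
    rw [← ENNReal.ofReal_ofNat 2, ← ENNReal.ofReal_inv_of_pos two_pos]
    refine ENNReal.ofReal_le_ofReal ?_
    rw [div_le_iff₀ (by positivity)]
    nlinarith
  simp only [hrescale]
  calc _ ≤ 2 * (iidPMF p m).lexpect fun S => prob (iidPMF p m)
        {T | ∃ A ∈ 𝓔, m * ε / 2 < |sampleCount S A - sampleCount T A|} :=
        prob_exists_lt_abs_sub_le_two_mul_lexpect _ 𝓔 (fun A S => sampleCount S A) _ hcheb
    _ ≤ 2 * (K * ENNReal.ofReal (2 * Real.exp (-(m * ε ^ 2) / 8))) := by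
        gcongr
        simp only [prob_eq_lexpect_indicator]
        refine lexpect_iidPMF_iidPMF_le_of_swapAt p _ _ fun S T => ?_
        refine le_of_eq_of_le ?_ (prob_exists_lt_abs_sampleCount_swapAt_sub_le h𝓔 S T hε.le)
        rw [prob_eq_lexpect_indicator]
        rfl
    _ = _ := by
        rw [← ENNReal.ofReal_natCast, ← ENNReal.ofReal_ofNat 2,
          ← ENNReal.ofReal_mul (by positivity), ← ENNReal.ofReal_mul (by positivity)]
        ring_nf

end UniformConvergence

section SauerShelah

lemma LO_two_eq_iff (a b : LO 2) : a = b ↔ (a ≠ 1 ↔ b ≠ 1) := by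
  revert a b
  decide

lemma card_filter_powerset_card_le_le {ι : Type*} [DecidableEq ι] (J : Finset ι) (d : ℕ) :
    {s ∈ J.powerset | s.card ≤ d}.card ≤ (J.card + 1) ^ d := by
  induction d with
  | zero =>
    refine Finset.card_le_one.2 fun s hs t ht => ?_
    simp only [Finset.mem_filter, Nat.le_zero, Finset.card_eq_zero] at hs ht
    rw [hs.2, ht.2]
  | succ d ih =>
    have hsplit : {s ∈ J.powerset | s.card ≤ d + 1}
        ⊆ {s ∈ J.powerset | s.card ≤ d} ∪ J.powersetCard (d + 1) := by
      intro s hs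
      simp only [Finset.mem_filter, Finset.mem_union, Finset.mem_powerset,
        Finset.mem_powersetCard] at hs ⊢
      exact (Nat.le_or_eq_of_le_succ hs.2).imp (⟨hs.1, ·⟩) (⟨hs.1, ·⟩)
    calc _ ≤ (J.card + 1) ^ d + J.card ^ (d + 1) := by
          grw [Finset.card_le_card hsplit, Finset.card_union_le, ih, Finset.card_powersetCard,
            Nat.choose_le_pow]
      _ ≤ (J.card + 1) ^ d + J.card * (J.card + 1) ^ d := by
          rw [pow_succ']
          gcongr
          omega
      _ = (J.card + 1) ^ (d + 1) := by ring

/-- Sauer–Shelah, with the restriction of a binary profile to `J` encoded by the issues where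
it is not `1`. -/
lemma exists_card_le_forall_filter_ne_one_mem {I : Type*} (𝓒 : Set (I → LO 2))
    {d : ℕ} (hd : ∀ J : Finset I, Shatters 𝓒 J → J.card ≤ d) (J : Finset I) :
    ∃ 𝓕 : Finset (Finset I), 𝓕.card ≤ (J.card + 1) ^ d ∧ ∀ C ∈ 𝓒, {i ∈ J | C i ≠ 1} ∈ 𝓕 := by
  classical
  refine ⟨{s ∈ J.powerset | ∃ C ∈ 𝓒, s = {i ∈ J | C i ≠ 1}}, ?_,
    fun C hC => Finset.mem_filter.2 ⟨Finset.mem_powerset.2 (Finset.filter_subset _ _), C, hC, rfl⟩⟩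
  refine (Finset.card_le_card_shatterer _).trans <|
    le_trans ?_ (card_filter_powerset_card_le_le J d)
  refine Finset.card_le_card fun s hs => ?_
  rw [Finset.mem_shatterer] at hs
  have hsJ : s ⊆ J := by
    obtain ⟨u, hu, hsu⟩ := hs.exists_superset
    exact hsu.trans (Finset.mem_powerset.1 (Finset.mem_filter.1 hu).1)
  refine Finset.mem_filter.2 ⟨Finset.mem_powerset.2 hsJ, hd s fun g => ?_⟩
  obtain ⟨u, hu, hsu⟩ := hs (Finset.filter_subset (fun i => g i ≠ 1) s)
  obtain ⟨C, hC, rfl⟩ := (Finset.mem_filter.1 hu).2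
  refine ⟨C, hC, fun i hi => (LO_two_eq_iff _ _).2 ?_⟩
  have := congrArg (i ∈ ·) hsu
  simp only [Finset.mem_inter, Finset.mem_filter, hi, hsJ hi, true_and, eq_iff_iff] at this
  exact this

end SauerShelah

section Profiles

variable {I : Type*} {N : ℕ}

def agreeSet (C : I → LO N) : Set (LO N × I) := {ω | C ω.2 = ω.1}

lemma traceBound_image_agreeSet (𝓒 : Set (I → LO 2)) {d : ℕ}
    (hd : ∀ J : Finset I, Shatters 𝓒 J → J.card ≤ d) (n : ℕ) :
    TraceBound (agreeSet '' 𝓒) n ((n + 1) ^ d) := by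
  classical
  intro P hP
  obtain ⟨𝓕, h𝓕, hC⟩ := exists_card_le_forall_filter_ne_one_mem 𝓒 hd (P.image Prod.snd)
  refine ⟨𝓕.image fun F => {ω | ω.2 ∈ F ↔ ω.1 ≠ 1}, ?_, ?_⟩
  · grw [Finset.card_image_le, h𝓕, Finset.card_image_le, hP]
  · rintro _ ⟨C, hC', rfl⟩
    refine ⟨_, Finset.mem_image_of_mem _ (hC C hC'), fun ω hω => ?_⟩
    simp only [agreeSet, Set.mem_ofPred_eq, Finset.mem_filter,
      Finset.mem_image_of_mem Prod.snd hω, true_and]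
    exact LO_two_eq_iff _ _

lemma sampleUtility_eq_sampleCount_agreeSet {m : ℕ} (S : Fin m → LO N × I) (C : I → LO N) :
    sampleUtility S C = sampleCount S (agreeSet C) / m := by
  simp [sampleUtility, sampleCount, agreeSet, Set.indicator_apply]

lemma popUtility_eq_toReal_prob_agreeSet (DI : PMF I) (M : I → PMF (LO N)) (C : I → LO N) :
    popUtility DI M C = (prob (sampleDist DI M) (agreeSet C)).toReal := by
  rw [popUtility, prob, sampleDist, toOuterMeasure_bind_apply]
  refine congrArg ENNReal.toReal (tsum_congr fun i => ?_)
  rw [toOuterMeasure_map_apply, show (fun o => (o, i)) ⁻¹' agreeSet C = {C i} by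
    ext; simp [agreeSet, eq_comm], toOuterMeasure_apply_singleton]

end Profiles

lemma iSup_sub_two_mul_le_of_abs_sub_le {ι : Type*} {U V : ι → ℝ} {j : ι} {ε : ℝ}
    (hj : ∀ i, V i ≤ V j) (h : ∀ i, |V i - U i| ≤ ε) : (⨆ i, U i) - 2 * ε ≤ U j := by
  have : Nonempty ι := ⟨j⟩
  rw [sub_le_iff_le_add]
  refine ciSup_le fun i => ?_
  linarith [abs_le.1 (h i), abs_le.1 (h j), hj i]

lemma ofReal_one_sub_le_prob_compl {α : Type*} (p : PMF α) {s : Set α} {δ : ℝ} (hδ : 0 ≤ δ)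
    (hs : prob p s ≤ ENNReal.ofReal δ) : ENNReal.ofReal (1 - δ) ≤ prob p sᶜ := by
  rw [ENNReal.ofReal_sub 1 hδ, ENNReal.ofReal_one, tsub_le_iff_left, ← prob_add_prob_compl p s]
  gcongr

open Real in
lemma log_le_div_add_log {x y : ℝ} (hx : 0 < x) (hy : 0 < y) : log x ≤ x / y + log y := by
  have := log_le_sub_one_of_pos (div_pos hx hy)
  rw [log_div hx.ne' hy.ne'] at this
  linarith

open Real in
lemma sample_size_bound {d m : ℕ} (hd : 0 < d) {ε δ : ℝ} (hε : 0 < ε) (hε2 : ε < 1 / 2)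
    (hδ : 0 < δ) (hδ1 : δ < 1)
    (hm : 200 / ε ^ 2 * (d * (log d + log (1 / ε) + log (1 / δ))) ≤ m) :
    8 ≤ m * ε ^ 2 ∧ 4 * ((2 * m + 1 : ℕ) : ℝ) ^ d * exp (-(m * ε ^ 2) / 8) ≤ δ := by
  obtain ⟨x, hxm⟩ : ∃ x : ℝ, m * ε ^ 2 = x := ⟨_, rfl⟩
  rw [hxm]
  have hd1 : (1 : ℝ) ≤ d := Nat.one_le_cast.2 hd
  have hl2 : 0.69 < log 2 := log_two_gt_d9.trans' (by norm_num)
  have hb : log 2 ≤ log (1 / ε) := log_le_log two_pos (by rw [le_div_iff₀ hε]; linarith)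
  have ha : 0 ≤ log d := log_nonneg hd1
  have hc : 0 ≤ log (1 / δ) := log_nonneg (by rw [le_div_iff₀ hδ]; linarith)
  have hx : 200 * (d * log d + d * log (1 / ε) + d * log (1 / δ)) ≤ x := by
    rw [div_mul_eq_mul_div, div_le_iff₀ (by positivity), hxm] at hm
    linarith
  have hdb : d * log 2 ≤ d * log (1 / ε) := mul_le_mul_of_nonneg_left hb (by positivity)
  have hdb' : log 2 ≤ d * log 2 := le_mul_of_one_le_left (by positivity) hd1
  have hdc : log (1 / δ) ≤ d * log (1 / δ) := le_mul_of_one_le_left hc hd1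
  have hda : 0 ≤ d * log d := by positivity
  have hx8 : 8 ≤ x := by linarith
  refine ⟨hx8, ?_⟩
  have hx0 : 0 < x := by linarith
  have hmx : (m : ℝ) = x * (1 / ε) ^ 2 := by rw [← hxm]; field_simp
  have hm0 : (0 : ℝ) < m := by rw [hmx]; positivity
  have hlog2m : log (2 * m + 1) ≤ 2 * log 2 + log x + 2 * log (1 / ε) := by
    calc log (2 * m + 1) ≤ log (2 ^ 2 * m) := log_le_log (by positivity) (by nlinarith [hm0])
      _ = _ := by
        rw [log_mul (by norm_num) hm0.ne', log_pow, hmx, log_mul hx0.ne' (by positivity), log_pow]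
        push_cast
        ring
  -- `log x ≤ x / (32 d) + log (32 d)`, scaled by `d`
  have hlogx : d * log x ≤ x / 32 + d * (5 * log 2 + log d) := by
    have h := mul_le_mul_of_nonneg_left
      (log_le_div_add_log hx0 (by positivity : (0 : ℝ) < 32 * d)) (by positivity : (0 : ℝ) ≤ d)
    rw [log_mul (by norm_num) (by positivity), show (32 : ℝ) = 2 ^ 5 by norm_num, log_pow,
      mul_add, mul_div_assoc', mul_comm (d : ℝ) x, mul_div_mul_right _ _ (by positivity)] at h
    push_cast at h
    linarith
  have hdlog2m := mul_le_mul_of_nonneg_left hlog2m (by positivity : (0 : ℝ) ≤ d)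
  refine (log_le_log_iff (by positivity) hδ).1 ?_
  rw [log_mul (by positivity) (exp_pos _).ne', log_mul (by norm_num) (by positivity), log_exp,
    log_pow, show (4 : ℝ) = 2 ^ 2 by norm_num, log_pow, show log δ = -log (1 / δ) by
      rw [one_div, log_inv, neg_neg]]
  push_cast
  linarith

/-- **Majority vote approximately maximizes population utility.** There is a universal
constant `c > 0` such that for `N = 2`, any nonempty candidate space `𝓒` of finite nonzero
VC dimension `d`, any mechanism `fmaj` that maps each sample to a profile of `𝓒` maximizing
the sample utility, any saliency distribution, population marginal, `ε > 0`, `δ ∈ (0,1)`,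
and sample size `m ≥ (c/ε²)·d·(log d + log(1/ε) + log(1/δ))`: with probability at least
`1 - δ`, `U(fmaj(S)) ≥ sup_{C ∈ 𝓒} U(C) - 2ε`. -/
theorem majority_vote_approximately_maximizes_population_utility :
    ∃ c : ℝ, 0 < c ∧
      ∀ (I : Type) (𝓒 : Set (I → LO 2)), 𝓒.Nonempty →
        ∀ d : ℕ, 0 < d → VCDimEq 𝓒 d →
          ∀ fmaj : ∀ m : ℕ, (Fin m → LO 2 × I) → (I → LO 2),
            (∀ (m : ℕ) (S : Fin m → LO 2 × I), fmaj m S ∈ 𝓒 ∧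
              ∀ C ∈ 𝓒, sampleUtility S C ≤ sampleUtility S (fmaj m S)) →
            ∀ DI : PMF I, (∀ i : I, DI i ≠ 0) →
              ∀ (M : I → PMF (LO 2)) (ε δ : ℝ), 0 < ε → 0 < δ → δ < 1 →
                ∀ m : ℕ,
                  c / ε ^ 2 * (d * (Real.log d + Real.log (1 / ε) + Real.log (1 / δ))) ≤ m →
                  ENNReal.ofReal (1 - δ) ≤
                    prob (iidPMF (sampleDist DI M) m)
                      {S | (⨆ C : 𝓒, popUtility DI M C.1) - 2 * ε ≤
                        popUtility DI M (fmaj m S)} := by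
  refine ⟨200, by norm_num, fun I 𝓒 _ d hd hVC fmaj hfmaj DI _ M ε δ hε hδ hδ1 m hm => ?_⟩
  rcases le_or_gt (1 / 2) ε with hε2 | hε2
  · -- utilities lie in `[0, 1]`, so every sample is good
    refine le_of_le_of_eq ?_ ((toOuterMeasure_apply_eq_one_iff _ _).2 fun S _ => ?_).symm
    · exact ENNReal.ofReal_le_one.2 (by linarith)
    · have hU : ∀ C : I → LO 2, popUtility DI M C ∈ Set.Icc (0 : ℝ) 1 := fun C => by
        rw [popUtility_eq_toReal_prob_agreeSet]
        exact ⟨ENNReal.toReal_nonneg, ENNReal.toReal_le_of_le_ofReal zero_le_one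
          (by simpa using prob_le_one _ _)⟩
      have := Real.iSup_le (fun C : 𝓒 => (hU C).2) zero_le_one
      simp only [Set.mem_ofPred_eq]
      linarith [(hU (fmaj m S)).1]
  obtain ⟨hm8, htail⟩ := sample_size_bound hd hε hε2 hδ hδ1 hm
  have hbad := prob_exists_lt_abs_sampleCount_div_sub_le (sampleDist DI M)
    (traceBound_image_agreeSet 𝓒 hVC.2 (2 * m)) hε hm8
  refine (ofReal_one_sub_le_prob_compl _ hδ.le (hbad.trans (ENNReal.ofReal_le_ofReal ?_))).trans
    (prob_mono _ fun S hS => ?_)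
  · simpa [mul_assoc] using htail
  · simp only [Set.mem_compl_iff, Set.mem_ofPred_eq, not_exists, not_and, not_lt] at hS
    refine iSup_sub_two_mul_le_of_abs_sub_le (j := ⟨fmaj m S, (hfmaj m S).1⟩)
      (V := fun C : 𝓒 => sampleUtility S C.1) (fun C => (hfmaj m S).2 C.1 C.2) fun C => ?_
    rw [sampleUtility_eq_sampleCount_agreeSet, popUtility_eq_toReal_prob_agreeSet]
    exact hS _ ⟨C.1, C.2, rfl⟩
end
end

section
/- Closure of privileged orderings under concatenation: Let c₁, c₂, …, c_{k+m−1} ∈ [N] (k, m ≥ 2) be distinct outcomes and let i be an issue. If o : c₁ ≻ c₂ ≻ ⋯ ≻ c_k and o' : c_k ≻ c_{k+1} ≻ ⋯ ≻ c_{k+m−1} are both privileged orderings for issue i, then the concatenation o⊕o' : c₁ ≻ c₂ ≻ ⋯ ≻ c_{k+m−1} is also a privileged ordering for issue i. -/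
open scoped ENNReal

noncomputable section

/-- The partial ordering given by the list `l` (distinct outcomes, most preferred first)
is privileged for issue `i` w.r.t. the candidate space `𝓒`. -/
def Privileged {I : Type*} [DecidableEq I] {N : ℕ} (𝓒 : Set (I → LO N)) (i : I)
    (l : List (Fin N)) : Prop :=
  ∀ C : I → LO N, l.Pairwise (prefers (C i)) →
    ∀ σ : LO N, (∀ x : Fin N, x ∉ l → σ x = x) →
      odotProfile C i σ ∈ 𝓒 → C ∈ 𝓒

/-- Edge `u → v` of the privilege graph `G_i`: the ordering `u ≻ v` is privileged. -/
def PrivEdge {I : Type*} [DecidableEq I] {N : ℕ} (𝓒 : Set (I → LO N)) (i : I)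
    (u v : Fin N) : Prop :=
  u ≠ v ∧ Privileged 𝓒 i [u, v]

/-!
Suppose `C i` ranks the outcomes of `l` in the order of `l` and `C ⊙ᵢ σ ∈ 𝓒` for a permutation
`σ` of those outcomes. Privilege of a block lets us replace `σ` by `σ τ`, where `τ` permutes the
block so that it becomes sorted, without leaving `𝓒`. Undoing an inversion strictly increases the
rank agreement `∑ₓ rank_{C i}(x) · rank_{C i ⊙ σ}(x)` (rearrangement inequality for two terms), so
a `σ` of maximal agreement has both blocks sorted. As the blocks share the outcome `c_k`, all of
`l` is then sorted by `C i ⊙ σ`, which forces `σ = 1`, that is `C ∈ 𝓒`.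
-/

theorem List.Pairwise.of_take_of_drop_pred {α : Type*} {R : α → α → Prop} [IsTrans α R]
    {l : List α} {k : ℕ} (h₁ : (l.take k).Pairwise R) (h₂ : (l.drop (k - 1)).Pairwise R) :
    l.Pairwise R := by
  rcases Nat.eq_zero_or_pos k with rfl | hk
  · simpa using h₂
  rcases le_or_gt l.length (k - 1) with hl | hl
  · rwa [List.take_of_length_le (by omega)] at h₁
  obtain ⟨j, rfl⟩ : ∃ j, k = j + 1 := ⟨k - 1, by omega⟩
  rw [Nat.add_sub_cancel] at h₂ hl
  rw [List.take_succ_eq_append_getElem hl, List.pairwise_append] at h₁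
  rw [List.drop_eq_getElem_cons hl, List.pairwise_cons] at h₂
  rw [← List.take_append_drop j l, List.pairwise_append, List.drop_eq_getElem_cons hl]
  refine ⟨h₁.1, List.pairwise_cons.mpr h₂, fun a ha b hb => ?_⟩
  have hab := h₁.2.2 a ha l[j] (List.mem_singleton_self _)
  rcases List.mem_cons.mp hb with rfl | hb
  · exact hab
  · exact _root_.trans hab (h₂.1 b hb)

section

variable {N : ℕ}

lemma prefers_irrefl (o : LO N) (x : Fin N) : ¬ prefers o x x := lt_irrefl _

lemma prefers.ne {o : LO N} {x y : Fin N} (h : prefers o x y) : x ≠ y :=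
  fun hxy => prefers_irrefl o x (hxy ▸ h)

instance (o : LO N) : IsTrans (Fin N) (prefers o) := ⟨fun _ _ _ => lt_trans⟩

lemma prefers_of_not_prefers (o : LO N) {x y : Fin N} (hxy : x ≠ y) (h : ¬ prefers o x y) :
    prefers o y x :=
  lt_of_le_of_ne (not_lt.mp h) fun he => hxy (o.symm.injective he).symm

lemma apply_mem_iff_mem {σ : LO N} {l : List (Fin N)} (hσ : ∀ x ∉ l, σ x = x) (x : Fin N) :
    σ x ∈ l ↔ x ∈ l := by
  refine ⟨fun h => ?_, fun h => ?_⟩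
  · by_contra hx
    exact hx (hσ x hx ▸ h)
  · by_contra hσx
    rw [σ.injective (hσ _ hσx)] at hσx
    exact hσx h

/-- Both orders rank `l` in the same sequence over the same set of ranks. -/
lemma eq_one_of_pairwise_prefers {o σ : LO N} {l : List (Fin N)} (hσ : ∀ x ∉ l, σ x = x)
    (ho : l.Pairwise (prefers o)) (hoσ : l.Pairwise (prefers (odot o σ))) : σ = 1 := by
  have hranks : l.map (fun x => o.symm x) = l.map (fun x => o.symm (σ.symm x)) := by
    refine List.Pairwise.eq_of_mem_iff (r := (· < ·)) (List.pairwise_map.mpr ho)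
      (List.pairwise_map.mpr hoσ) fun r => ?_
    simp only [List.mem_map]
    constructor
    · rintro ⟨x, hx, rfl⟩
      exact ⟨σ x, (apply_mem_iff_mem hσ x).mpr hx, by simp⟩
    · rintro ⟨x, hx, rfl⟩
      exact ⟨σ.symm x, (apply_mem_iff_mem hσ _).mp (by simpa using hx), rfl⟩
  refine Equiv.ext fun x => ?_
  by_cases hx : x ∈ l
  · have := List.map_inj_left.mp hranks (σ x) ((apply_mem_iff_mem hσ x).mpr hx)
    simpa using o.symm.injective this
  · exact hσ x hx

def rankAgreement (o o' : LO N) : ℕ := ∑ x, (o.symm x : ℕ) * (o'.symm x : ℕ)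

lemma rankAgreement_lt_trans_swap {o o' : LO N} {x y : Fin N} (hxy : prefers o x y)
    (hyx : prefers o' y x) : rankAgreement o o' < rankAgreement o (o'.trans (Equiv.swap x y)) := by
  classical
  unfold rankAgreement
  rw [← Finset.sum_sdiff (Finset.subset_univ {x, y}),
    ← Finset.sum_sdiff (Finset.subset_univ {x, y}) (f := fun z => _ * _)]
  have hrest : ∀ z ∈ Finset.univ \ {x, y},
      (o.symm z : ℕ) * ((o'.trans (Equiv.swap x y)).symm z : ℕ) =
        (o.symm z : ℕ) * (o'.symm z : ℕ) := by
    intro z hz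
    simp only [Finset.mem_sdiff, Finset.mem_insert, Finset.mem_singleton, not_or] at hz
    simp [Equiv.swap_apply_of_ne_of_ne hz.2.1 hz.2.2]
  rw [Finset.sum_congr rfl hrest, Finset.sum_pair hxy.ne, Finset.sum_pair hxy.ne]
  simp only [Equiv.symm_trans_apply, Equiv.symm_swap, Equiv.swap_apply_left,
    Equiv.swap_apply_right]
  have hp : (o.symm x : ℕ) < o.symm y := hxy
  have hq : (o'.symm y : ℕ) < o'.symm x := hyx
  nlinarith

lemma exists_inversion {o o' : LO N} {l : List (Fin N)} (ho : l.Pairwise (prefers o))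
    (ho' : ¬ l.Pairwise (prefers o')) : ∃ x ∈ l, ∃ y ∈ l, prefers o x y ∧ prefers o' y x := by
  by_contra! h
  exact ho' (ho.imp_of_mem fun hx hy hxy =>
    prefers_of_not_prefers o' hxy.ne.symm (h _ hx _ hy hxy))

lemma exists_sort_rankAgreement_lt {o o' : LO N} {A : List (Fin N)}
    (hA : A.Pairwise (prefers o)) (hunsorted : ¬ A.Pairwise (prefers o')) :
    ∃ τ : LO N, (∀ x ∉ A, τ x = x) ∧ A.Pairwise (prefers (o'.trans τ)) ∧
      rankAgreement o o' < rankAgreement o (o'.trans τ) := by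
  have swap_fix : ∀ {a b}, a ∈ A → b ∈ A → ∀ z ∉ A, Equiv.swap a b z = z := fun ha hb z hz =>
    Equiv.swap_apply_of_ne_of_ne (by rintro rfl; exact hz ha) (by rintro rfl; exact hz hb)
  obtain ⟨x, hx, y, hy, hxy, hyx⟩ := exists_inversion hA hunsorted
  -- A maximiser of the agreement over permutations of `A` has no inversion left on `A`.
  obtain ⟨τ, hτ, hmax⟩ := Set.exists_max_image {τ : LO N | ∀ z ∉ A, τ z = z}
    (fun τ => rankAgreement o (o'.trans τ)) (Set.toFinite _) ⟨_, swap_fix hx hy⟩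
  refine ⟨τ, hτ, ?_, (rankAgreement_lt_trans_swap hxy hyx).trans_le (hmax _ (swap_fix hx hy))⟩
  by_contra hτ_unsorted
  obtain ⟨a, ha, b, hb, hab, hba⟩ := exists_inversion hA hτ_unsorted
  have hτ_swap : τ.trans (Equiv.swap a b) ∈ {τ : LO N | ∀ z ∉ A, τ z = z} := fun z hz => by
    simp [hτ z hz, swap_fix ha hb z hz]
  exact (rankAgreement_lt_trans_swap hab hba).not_ge (hmax _ hτ_swap)

variable {I : Type*} [DecidableEq I]

@[simp]
lemma odot_trans (o σ τ : LO N) : odot o (σ.trans τ) = (odot o σ).trans τ := rfl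

@[simp]
lemma odotProfile_self (C : I → LO N) (i : I) (σ : LO N) :
    odotProfile C i σ i = odot (C i) σ :=
  Function.update_self _ _ _

lemma odotProfile_odotProfile (C : I → LO N) (i : I) (σ τ : LO N) :
    odotProfile (odotProfile C i σ) i τ = odotProfile C i (σ.trans τ) := by
  simp only [odotProfile, Function.update_self, Function.update_idem, odot, Equiv.trans_assoc]

lemma odotProfile_one (C : I → LO N) (i : I) : odotProfile C i 1 = C :=
  Function.update_eq_self_iff.mpr (Equiv.trans_refl _)

lemma Privileged.exists_rankAgreement_lt {𝓒 : Set (I → LO N)} {i : I} {A l : List (Fin N)}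
    (hA : Privileged 𝓒 i A) (hAl : A ⊆ l) {C : I → LO N} (hCA : A.Pairwise (prefers (C i)))
    {σ : LO N} (hσ : ∀ x ∉ l, σ x = x) (hmem : odotProfile C i σ ∈ 𝓒)
    (hunsorted : ¬ A.Pairwise (prefers (odot (C i) σ))) :
    ∃ σ' : LO N, (∀ x ∉ l, σ' x = x) ∧ odotProfile C i σ' ∈ 𝓒 ∧
      rankAgreement (C i) (odot (C i) σ) < rankAgreement (C i) (odot (C i) σ') := by
  obtain ⟨τ, hτ, hsorted, hlt⟩ := exists_sort_rankAgreement_lt hCA hunsorted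
  refine ⟨σ.trans τ, fun x hx => by simp [hσ x hx, hτ x fun h => hx (hAl h)], ?_, hlt⟩
  refine hA _ (by simpa using hsorted) τ.symm
    (fun x hx => (Equiv.symm_apply_eq τ).mpr (hτ x hx).symm) ?_
  rwa [odotProfile_odotProfile, Equiv.trans_assoc, Equiv.self_trans_symm, Equiv.trans_refl]

theorem Privileged.of_sublist_of_sublist {𝓒 : Set (I → LO N)} {i : I} {A B l : List (Fin N)}
    (hA : Privileged 𝓒 i A) (hB : Privileged 𝓒 i B) (hAl : A.Sublist l) (hBl : B.Sublist l)
    (hcover : ∀ o : LO N, A.Pairwise (prefers o) → B.Pairwise (prefers o) →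
      l.Pairwise (prefers o)) :
    Privileged 𝓒 i l := by
  intro C hC σ hσ hmem
  obtain ⟨σ₀, ⟨hσ₀, hmem₀⟩, hmax⟩ := Set.exists_max_image
    {σ : LO N | (∀ x ∉ l, σ x = x) ∧ odotProfile C i σ ∈ 𝓒}
    (fun σ => rankAgreement (C i) (odot (C i) σ)) (Set.toFinite _) ⟨σ, hσ, hmem⟩
  have sorted_of_privileged : ∀ {A : List (Fin N)}, Privileged 𝓒 i A → A.Sublist l →
      A.Pairwise (prefers (odot (C i) σ₀)) := by
    intro A hA hAl
    by_contra hunsorted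
    obtain ⟨σ₁, hσ₁, hmem₁, hlt⟩ :=
      hA.exists_rankAgreement_lt hAl.subset (hC.sublist hAl) hσ₀ hmem₀ hunsorted
    exact hlt.not_ge (hmax σ₁ ⟨hσ₁, hmem₁⟩)
  have hσ₀_one : σ₀ = 1 := eq_one_of_pairwise_prefers hσ₀ hC
    (hcover _ (sorted_of_privileged hA hAl) (sorted_of_privileged hB hBl))
  rwa [hσ₀_one, odotProfile_one] at hmem₀

end

theorem privileged_closure_concat_general (N : ℕ) (I : Type) [DecidableEq I]
    (𝓒 : Set (I → LO N)) (i : I) (l : List (Fin N))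
    (k : ℕ) (h1 : Privileged 𝓒 i (l.take k)) (h2 : Privileged 𝓒 i (l.drop (k - 1))) :
    Privileged 𝓒 i l :=
  h1.of_sublist_of_sublist h2 (List.take_sublist k l) (List.drop_sublist (k - 1) l)
    fun _ => List.Pairwise.of_take_of_drop_pred

/-- **Closure of privileged orderings under concatenation.** Let `l` be a list of
`k + m - 1` distinct outcomes (`k, m ≥ 2`). If the ordering given by the first `k`
outcomes of `l` and the ordering given by the last `m` outcomes of `l` (sharing the `k`-th
outcome) are both privileged for issue `i`, then the whole ordering `l` is privileged for
issue `i`. -/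
theorem privileged_closure_concat (N : ℕ) (hN : 2 ≤ N) (I : Type) [DecidableEq I]
    (𝓒 : Set (I → LO N)) (i : I) (l : List (Fin N)) (hnd : l.Nodup)
    (k m : ℕ) (hk : 2 ≤ k) (hm : 2 ≤ m) (hlen : l.length = k + m - 1)
    (h1 : Privileged 𝓒 i (l.take k)) (h2 : Privileged 𝓒 i (l.drop (k - 1))) :
    Privileged 𝓒 i l :=
  privileged_closure_concat_general N I 𝓒 i l k h1 h2
end
end

section
/- Sorting a subset into the target order strictly decreases the inversion count: Let L and o* be linear orders on a finite set X, and let T ⊆ X with |T| ≥ 2 be such that the elements of T do not appear in L in the relative order prescribed by o*. Let σ be the unique permutation of T such that in L⊙σ the elements of T appear in the relative order prescribed by o*. Then Inv_{o*}(L⊙σ) < Inv_{o*}(L). -/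
noncomputable section

/-- A linear order on a finite set `X`, encoded as a rank bijection `X ≃ Fin |X|`
(smaller rank = more preferred / earlier). `L x < L y` means `x ≻_L y`. -/
abbrev RankOrd (X : Type*) [Fintype X] := X ≃ Fin (Fintype.card X)

/-- `L ⊙ σ` : the linear order with `s₁ ≻_{L⊙σ} s₂` iff `σ⁻¹ s₁ ≻_L σ⁻¹ s₂`,
i.e. the rank of `x` in `L ⊙ σ` is the rank of `σ⁻¹ x` in `L`. -/
def odotLin {X : Type*} [Fintype X] (L : RankOrd X) (σ : Equiv.Perm X) : RankOrd X :=
  σ.symm.trans L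

/-- Inversion count `Inv_{ostar}(L)`: the number of (unordered) pairs ranked oppositely
by `L` and by `ostar`, counted here as ordered pairs `(x, y)` with `x ≻_{ostar} y` and
`y ≻_L x`. -/
def invCount {X : Type*} [Fintype X] [DecidableEq X] (ostar L : RankOrd X) : ℕ :=
  (Finset.univ.filter fun p : X × X => ostar p.1 < ostar p.2 ∧ L p.2 < L p.1).card

/-! Split the ordered pairs into those inside `T`, those across `T` and its complement, and
those outside `T`. Inside `T`, `L ⊙ σ` has no inversions while `L` has at least one; outside
`T` the two orders agree. For a fixed `y ∉ T`, the `t ∈ T` forming an inversion with `y` are the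
symmetric difference of `B = {t ∈ T | t ≻_{o*} y}` and `W = {t ∈ T | t ≻_L y}`. Sorting replaces
`W` by `σ W`, a set of the same size which is an initial segment of `T` for `o*`, like `B`; being
nested with `B`, it has the smallest possible symmetric difference with `B`. -/

open Finset

theorem Equiv.Perm.symm_apply_mem_iff_of_forall_notMem {α : Type*} {σ : Equiv.Perm α}
    {s : Finset α} (hfix : ∀ x, x ∉ s → σ x = x) {x : α} : σ.symm x ∈ s ↔ x ∈ s := by
  refine not_iff_not.mp ⟨fun h => ?_, fun h => ?_⟩
  · rwa [← σ.apply_symm_apply x, hfix _ h]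
  · rwa [σ.symm_apply_eq.mpr (hfix x h).symm]

theorem Finset.card_sdiff_add_card_sdiff_le_of_subset_or_subset {α : Type*} [DecidableEq α]
    {s t u : Finset α} (hst : s ⊆ t ∨ t ⊆ s) (htu : #t = #u) :
    #(s \ t) + #(t \ s) ≤ #(s \ u) + #(u \ s) := by
  have hsu := le_card_sdiff s u
  have hus := le_card_sdiff u s
  rcases hst with h | h <;>
    simp only [sdiff_eq_empty_iff_subset.mpr h, card_sdiff_of_subset h, card_empty] <;> omega

theorem Finset.filter_lt_subset_or_subset {α β γ : Type*} [LinearOrder β] [LinearOrder γ]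
    {T : Finset α} {f : α → β} {g : α → γ} (hfg : ∀ x ∈ T, ∀ y ∈ T, f x < f y → g x < g y)
    (b : β) (c : γ) :
    T.filter (f · < b) ⊆ T.filter (g · < c) ∨ T.filter (g · < c) ⊆ T.filter (f · < b) := by
  by_contra! h
  obtain ⟨⟨s, hsf, hsg⟩, ⟨w, hwg, hwf⟩⟩ := And.imp not_subset.mp not_subset.mp h
  simp only [mem_filter, not_and, not_lt] at hsf hsg hwg hwf
  exact (hsg hsf.1).not_gt ((hfg s hsf.1 w hwg.1 (hsf.2.trans_le (hwf hwg.1))).trans hwg.2)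

theorem Finset.sum_sum_univ_eq_add_cross_add_compl {α M : Type*} [Fintype α] [DecidableEq α]
    [AddCommMonoid M] (T : Finset α) (f : α → α → M) :
    ∑ x, ∑ y, f x y = ∑ x ∈ T, ∑ y ∈ T, f x y + ∑ y ∈ Tᶜ, ∑ t ∈ T, (f t y + f y t)
      + ∑ x ∈ Tᶜ, ∑ y ∈ Tᶜ, f x y := by
  simp only [← sum_add_sum_compl T (fun y => f _ y), sum_add_distrib,
    ← sum_add_sum_compl T (fun x => ∑ y ∈ T, f x y + ∑ y ∈ Tᶜ, f x y)]
  rw [sum_comm (s := T) (t := Tᶜ)]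
  abel

section Inversions

variable {X : Type*} [Fintype X]

def invIndicator (o N : RankOrd X) (x y : X) : ℕ := if o x < o y ∧ N y < N x then 1 else 0

theorem invCount_eq_sum_sum [DecidableEq X] (o N : RankOrd X) :
    invCount o N = ∑ x, ∑ y, invIndicator o N x y := by
  rw [invCount, card_filter, Fintype.sum_prod_type]
  rfl

theorem sum_sum_invIndicator_eq_zero {o N : RankOrd X} {T : Finset X}
    (hsorted : ∀ x ∈ T, ∀ y ∈ T, o x < o y → N x < N y) :
    ∑ x ∈ T, ∑ y ∈ T, invIndicator o N x y = 0 :=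
  sum_eq_zero fun x hx => sum_eq_zero fun y hy =>
    if_neg fun h => (hsorted x hx y hy h.1).not_gt h.2

theorem sum_sum_invIndicator_pos {o N : RankOrd X} {T : Finset X}
    (hunsorted : ∃ x ∈ T, ∃ y ∈ T, o x < o y ∧ N y < N x) :
    0 < ∑ x ∈ T, ∑ y ∈ T, invIndicator o N x y := by
  obtain ⟨x, hx, y, hy, hxy⟩ := hunsorted
  exact sum_pos' (fun _ _ => Nat.zero_le _)
    ⟨x, hx, sum_pos' (fun _ _ => Nat.zero_le _) ⟨y, hy, by simp [invIndicator, hxy]⟩⟩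

theorem sum_sum_invIndicator_congr {o N N' : RankOrd X} {S : Finset X}
    (h : ∀ x ∈ S, N x = N' x) :
    ∑ x ∈ S, ∑ y ∈ S, invIndicator o N x y = ∑ x ∈ S, ∑ y ∈ S, invIndicator o N' x y :=
  sum_congr rfl fun x hx => sum_congr rfl fun y hy => by
    simp only [invIndicator, h x hx, h y hy]

theorem sum_invIndicator_cross_eq [DecidableEq X] {o N : RankOrd X} {T : Finset X} {y : X}
    (hy : y ∉ T) :
    ∑ t ∈ T, (invIndicator o N t y + invIndicator o N y t)
      = #(T.filter (o · < o y) \ T.filter (N · < N y))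
        + #(T.filter (N · < N y) \ T.filter (o · < o y)) := by
  rw [sum_add_distrib, ← filter_and_not, ← filter_and_not, card_filter, card_filter]
  congr 1 <;> refine sum_congr rfl fun t ht => if_congr ?_ rfl rfl
  all_goals
    have hty : t ≠ y := ne_of_mem_of_not_mem ht hy
    have := o.injective.ne hty
    have := N.injective.ne hty
    grind

theorem odotLin_apply_of_notMem {L : RankOrd X} {σ : Equiv.Perm X} {T : Finset X}
    (hfix : ∀ x, x ∉ T → σ x = x) {x : X} (hx : x ∉ T) : odotLin L σ x = L x :=
  congrArg L (σ.symm_apply_eq.mpr (hfix x hx).symm)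

theorem sum_invIndicator_cross_odotLin_le [DecidableEq X] {L o : RankOrd X} {T : Finset X}
    {σ : Equiv.Perm X} (hfix : ∀ x, x ∉ T → σ x = x)
    (hsorted : ∀ x ∈ T, ∀ y ∈ T, o x < o y → odotLin L σ x < odotLin L σ y)
    {y : X} (hy : y ∉ T) :
    ∑ t ∈ T, (invIndicator o (odotLin L σ) t y + invIndicator o (odotLin L σ) y t)
      ≤ ∑ t ∈ T, (invIndicator o L t y + invIndicator o L y t) := by
  rw [sum_invIndicator_cross_eq hy, sum_invIndicator_cross_eq hy]
  refine card_sdiff_add_card_sdiff_le_of_subset_or_subset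
    (filter_lt_subset_or_subset hsorted _ _) (card_equiv σ.symm fun t => ?_)
  simp only [mem_filter, odotLin_apply_of_notMem hfix hy,
    Equiv.Perm.symm_apply_mem_iff_of_forall_notMem hfix]
  rfl

end Inversions

theorem sorting_subset_decreases_inversions_general {X : Type*} [Fintype X] [DecidableEq X]
    (L ostar : RankOrd X) (T : Finset X)
    (hunsorted : ∃ x ∈ T, ∃ y ∈ T, ostar x < ostar y ∧ L y < L x)
    (σ : Equiv.Perm X) (hfix : ∀ x : X, x ∉ T → σ x = x)
    (hsorted : ∀ x ∈ T, ∀ y ∈ T, ostar x < ostar y → odotLin L σ x < odotLin L σ y) :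
    invCount ostar (odotLin L σ) < invCount ostar L := by
  have hcross := sum_le_sum fun y hy =>
    sum_invIndicator_cross_odotLin_le hfix hsorted (mem_compl.mp hy)
  have hwithin := sum_sum_invIndicator_pos hunsorted
  rw [invCount_eq_sum_sum, invCount_eq_sum_sum, sum_sum_univ_eq_add_cross_add_compl T,
    sum_sum_univ_eq_add_cross_add_compl T, sum_sum_invIndicator_eq_zero hsorted,
    sum_sum_invIndicator_congr fun x hx => odotLin_apply_of_notMem hfix (mem_compl.mp hx)]
  omega

/-- **Sorting a subset into the target order strictly decreases the inversion count.**
Let `L` and `ostar` be linear orders on a finite set `X`, and `T ⊆ X` with `|T| ≥ 2` whose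
elements do not appear in `L` in the relative order prescribed by `ostar`. If `σ` is a
permutation of `T` (fixing everything outside `T`) such that in `L ⊙ σ` the elements of
`T` appear in the relative order prescribed by `ostar`, then
`Inv_{ostar}(L ⊙ σ) < Inv_{ostar}(L)`. -/
theorem sorting_subset_decreases_inversions {X : Type*} [Fintype X] [DecidableEq X]
    (L ostar : RankOrd X) (T : Finset X) (hT : 2 ≤ T.card)
    (hunsorted : ∃ x ∈ T, ∃ y ∈ T, ostar x < ostar y ∧ L y < L x)
    (σ : Equiv.Perm X) (hfix : ∀ x : X, x ∉ T → σ x = x)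
    (hsorted : ∀ x ∈ T, ∀ y ∈ T, ostar x < ostar y → odotLin L σ x < odotLin L σ y) :
    invCount ostar (odotLin L σ) < invCount ostar L :=
  sorting_subset_decreases_inversions_general L ostar T hunsorted σ hfix hsorted
end
end
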